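/- (Finite-alphabet sample complexity of the Chow-Liu algorithm.) Let X = (X_1, …, X_p) have finite support (|X| < ∞) and a tree-structured distribution p(·) ∈ P_T(c_1, c_2) with respect to a tree T on p ≥ 3 nodes, satisfying Assumptions 1 and 2. Fix δ ∈ (0, 1). There exists a constant C > 0, independent of δ, such that if the number n of i.i.d. samples of X satisfies n / (log_2 n)² ≥ 72 log(p/δ) / ( I^o − C/√n )² and I^o > C/√n, then the Chow-Liu algorithm applied to the n samples returns T^CL = T with probability at least 1 − δ. -/

import Mathlib

set_option linter.unusedSectionVars false

open scoped Classical

noncomputable section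

namespace TreePaper

/-- `f` is a probability mass function. -/
def IsProbDist {α : Type*} (f : α → ℝ) : Prop :=
  (∀ a, 0 ≤ f a) ∧ ∑' a, f a = 1

/-- Shannon entropy (base 2) of a pmf, with the convention `0 · log 0 = 0`. -/
def ent {α : Type*} (f : α → ℝ) : ℝ := -∑' a, f a * Real.logb 2 (f a)

variable {V : Type*} [Fintype V] [DecidableEq V] {A : Type*}

/-- Marginal pmf of the coordinate `i`. -/
def marg1 (P : (V → A) → ℝ) (i : V) : A → ℝ :=
  fun a => ∑' x : V → A, if x i = a then P x else 0

/-- Joint pmf of the pair of coordinates `(i, j)`. -/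
def marg2 (P : (V → A) → ℝ) (i j : V) : A × A → ℝ :=
  fun ab => ∑' x : V → A, if x i = ab.1 ∧ x j = ab.2 then P x else 0

theorem marg2_symm (P : (V → A) → ℝ) (i j : V) (a b : A) :
    marg2 P i j (a, b) = marg2 P j i (b, a) :=
  tsum_congr fun _ => if_congr and_comm rfl rfl

/-- Mutual information (in bits) between the coordinates `i` and `j`,
`I(X_i; X_j) = H(X_i) + H(X_j) − H(X_i, X_j)`. -/
def mi (P : (V → A) → ℝ) (i j : V) : ℝ :=
  ent (marg1 P i) + ent (marg1 P j) - ent (marg2 P i j)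

/-- The factor attached to an edge in the tree factorization of a Markov random field. -/
def edgeFactor (P : (V → A) → ℝ) (x : V → A) : Sym2 V → ℝ :=
  Sym2.lift ⟨fun i j => marg2 P i j (x i, x j) / (marg1 P i (x i) * marg1 P j (x j)),
    fun i j => by
      dsimp only
      rw [marg2_symm P i j (x i) (x j), mul_comm (marg1 P i (x i)) (marg1 P j (x j))]⟩

/-- The distribution `P` is Markov with respect to (i.e. factorizes according to)
the tree `T`:  `p(x) = ∏_i p(x_i) ∏_{(i,j) ∈ E} p(x_i, x_j) / (p(x_i) p(x_j))`. -/
def IsMarkovTree (T : SimpleGraph V) (P : (V → A) → ℝ) : Prop :=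
  ∀ x : V → A,
    P x = (∏ i, marg1 P i (x i)) *
      ∏ e : Sym2 V, if e ∈ T.edgeSet then edgeFactor P x e else 1

/-- The tuple `(s(w, w̄), u, ū)` lies in the feasibility set `EV²`:  `s(w, w̄)` is an
edge of `T` lying on the unique path of `T` from `u` to `ū`, and this path has
at least two edges. -/
def EVtuple (T : SimpleGraph V) (w wb u ub : V) : Prop :=
  T.Adj w wb ∧ ∃ p : T.Walk u ub, p.IsPath ∧ s(w, wb) ∈ p.edges ∧ 2 ≤ p.length

/-- The information threshold determined by the tree `T` and the
pairwise "mutual information" weights `I`: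
`(1/2) · min_{(e,u,ū) ∈ EV²} ( I(w, w̄) − I(u, ū) )`. -/
def thresh (T : SimpleGraph V) (I : V → V → ℝ) : ℝ :=
  (1 / 2) * sInf {x : ℝ | ∃ w wb u ub : V, EVtuple T w wb u ub ∧ x = I w wb - I u ub}

/-- Total weight of the graph `G` under the edge weights `I`. -/
def score (I : V → V → ℝ) (G : SimpleGraph V) : ℝ :=
  ∑ i, ∑ j, if G.Adj i j then I i j else 0

/-- `G` is a maximum-weight spanning tree for the weights `I`. -/
def IsMaxSpanTree (I : V → V → ℝ) (G : SimpleGraph V) : Prop :=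
  G.IsTree ∧ ∀ G' : SimpleGraph V, G'.IsTree → score I G' ≤ score I G

/-- Probability of the event `E` under `n` i.i.d. samples from the pmf `P`. -/
def probn (P : (V → A) → ℝ) (n : ℕ) (E : Set (Fin n → V → A)) : ℝ :=
  ∑' ω : E, ∏ k, P (ω.1 k)

/-- Empirical marginal pmf of the coordinate `i` computed from the data set `ω`. -/
def emp1 {n : ℕ} (ω : Fin n → V → A) (i : V) : A → ℝ :=
  fun a => (∑ k, if ω k i = a then (1 : ℝ) else 0) / n

/-- Empirical pairwise joint pmf of the coordinates `(i, j)`. -/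
def emp2 {n : ℕ} (ω : Fin n → V → A) (i j : V) : A × A → ℝ :=
  fun ab => (∑ k, if ω k i = ab.1 ∧ ω k j = ab.2 then (1 : ℝ) else 0) / n

/-- Plug-in estimate of the mutual information between coordinates `i` and `j`. -/
def empMI {n : ℕ} (ω : Fin n → V → A) (i j : V) : ℝ :=
  ent (emp1 ω i) + ent (emp1 ω j) - ent (emp2 ω i j)

/-- The Chow–Liu algorithm recovers the tree `T` exactly on the data set `ω`:
every maximum-weight spanning tree for the plug-in mutual information edge
weights equals `T`. -/
def CLRecovers {n : ℕ} (T : SimpleGraph V) (ω : Fin n → V → A) : Prop :=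
  ∀ G : SimpleGraph V, IsMaxSpanTree (fun i j => empMI ω i j) G → G = T

/-- Assumption 2: connectivity, strictly positive pairwise mutual informations,
and nondegeneracy (the tree structure is unique). -/
def Assumption2 (T : SimpleGraph V) (P : (V → A) → ℝ) : Prop :=
  T.Connected ∧ (∀ i j : V, i ≠ j → 0 < mi P i j) ∧
    ∀ T' : SimpleGraph V, T'.IsTree → IsMarkovTree T' P → T' = T


end TreePaper

/-!
If every plug-in mutual information is within `I^o` of the true one, then for every
`(e, u, ū) ∈ EV²` the estimated weight of `e` still exceeds that of `(u, ū)`, and then `T` is the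
only maximum-weight spanning tree: an edge `(u, ū)` of any other spanning tree `G` that is not in
`T` can be exchanged for an edge `e` of `T` on the `T`-path from `u` to `ū` that reconnects the two
halves of `G - (u, ū)`, which strictly increases the weight.

Mutual information is a continuous function of the pairwise joint pmf, so this happens as soon as
all empirical pairwise frequencies are `ε`-close to the true ones, which by a Chernoff bound and a
union bound fails with probability at most `K e^{-κ n}`. For `n > N` this is below
`exp (-n (I^o)² / (72 log₂² n))`, which the sample-size hypothesis bounds by `δ`; the constant
`C = I^o √(N + 1)` makes `C / √n < I^o` force `n > N`.
-/

namespace SimpleGraph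

variable {V : Type*} {G : SimpleGraph V} {u v x y : V}

theorem Walk.two_le_length_of_not_adj (p : G.Walk u v) (hne : u ≠ v) (hadj : ¬ G.Adj u v) :
    2 ≤ p.length := by
  by_contra! h
  interval_cases hp : p.length
  exacts [hne (Walk.eq_of_length_eq_zero hp), hadj (Walk.adj_of_length_eq_one hp)]

theorem Reachable.deleteEdges_reachable_or {w : V} (hadj : G.Adj u v) (h : G.Reachable u w) :
    (G.deleteEdges {s(u, v)}).Reachable u w ∨ (G.deleteEdges {s(u, v)}).Reachable v w := by
  rw [reachable_eq_reflTransGen] at h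
  induction h with
  | refl => exact Or.inl .rfl
  | @tail a b _ hab ih =>
    by_cases he : s(a, b) = s(u, v)
    · rcases Sym2.eq_iff.mp he with ⟨-, rfl⟩ | ⟨-, rfl⟩
      exacts [Or.inr .rfl, Or.inl .rfl]
    · have hd : (G.deleteEdges {s(u, v)}).Adj a b := deleteEdges_adj.mpr ⟨hab, he⟩
      exact ih.imp (·.trans hd.reachable) (·.trans hd.reachable)

theorem deleteEdges_sup_edge_of_adj (h : G.Adj u v) :
    G.deleteEdges {s(u, v)} ⊔ edge u v = G := by
  ext a b
  simp only [sup_adj, deleteEdges_adj, edge_adj, Set.mem_singleton_iff, Sym2.eq_iff]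
  constructor
  · rintro (⟨hab, -⟩ | ⟨⟨rfl, rfl⟩ | ⟨rfl, rfl⟩, -⟩)
    exacts [hab, h, h.symm]
  · intro hab
    by_cases he : a = u ∧ b = v ∨ a = v ∧ b = u
    exacts [Or.inr ⟨he, hab.ne⟩, Or.inl ⟨hab, he⟩]

theorem IsTree.deleteEdges_sup_edge [Finite V] (hG : G.IsTree) (hadj : G.Adj u v) (hne : x ≠ y)
    (hn : ¬ G.Adj x y) (hx : (G.deleteEdges {s(u, v)}).Reachable u x)
    (hy : (G.deleteEdges {s(u, v)}).Reachable v y) :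
    (G.deleteEdges {s(u, v)} ⊔ edge x y).IsTree := by
  set G' := G.deleteEdges {s(u, v)} ⊔ edge x y
  have hle : G.deleteEdges {s(u, v)} ≤ G' := le_sup_left
  have hxy : G'.Adj x y := Or.inr ((edge_adj ..).mpr ⟨Or.inl ⟨rfl, rfl⟩, hne⟩)
  have huv : G'.Reachable u v := (hx.mono hle).trans (hxy.reachable.trans (hy.symm.mono hle))
  have hlift : ∀ a b, G.Adj a b → G'.Reachable a b := fun a b hab => by
    by_cases he : s(a, b) = s(u, v)
    · rcases Sym2.eq_iff.mp he with ⟨rfl, rfl⟩ | ⟨rfl, rfl⟩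
      exacts [huv, huv.symm]
    · exact (deleteEdges_adj.mpr ⟨hab, he⟩ : (G.deleteEdges _).Adj a b).reachable.mono hle
  have hconn : G'.Connected := by
    refine (connected_iff _).mpr ⟨fun a b => ?_, hG.connected.nonempty⟩
    obtain ⟨p⟩ := hG.connected.preconnected a b
    induction p with
    | nil => rfl
    | cons h _ ih => exact (hlift _ _ h).trans ih
  have hcard : Nat.card G'.edgeSet = Nat.card G.edgeSet := by
    rw [Nat.card_coe_set_eq, Nat.card_coe_set_eq, edgeSet_sup, edgeSet_deleteEdges,
      edgeSet_edge_of_ne hne, Set.union_singleton,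
      Set.ncard_exchange (mt G.mem_edgeSet.mp hn) (G.mem_edgeSet.mpr hadj)]
  rw [isTree_iff_connected_and_card] at hG ⊢
  exact ⟨hconn, hcard ▸ hG.2⟩

end SimpleGraph

namespace TreePaper

open SimpleGraph

variable {V : Type*} {A : Type*}

section Recovery

variable {G T : SimpleGraph V} {w wb u ub : V}

theorem EVtuple.swap (h : EVtuple T w wb u ub) : EVtuple T wb w ub u := by
  obtain ⟨hadj, p, hp, he, hlen⟩ := h
  exact ⟨hadj.symm, p.reverse, hp.reverse, by simpa [Sym2.eq_swap] using he, by simpa using hlen⟩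

theorem two_mul_thresh_le [Finite V] (I : V → V → ℝ) (h : EVtuple T w wb u ub) :
    2 * thresh T I ≤ I w wb - I u ub := by
  have hbdd : BddBelow {x | ∃ w wb u ub, EVtuple T w wb u ub ∧ x = I w wb - I u ub} :=
    (Set.finite_range fun q : V × V × V × V => I q.1 q.2.1 - I q.2.2.1 q.2.2.2).bddBelow.mono
      (by rintro x ⟨w, wb, u, ub, -, rfl⟩; exact ⟨(w, wb, u, ub), rfl⟩)
  rw [thresh]
  linarith [csInf_le hbdd ⟨w, wb, u, ub, h, rfl⟩]

theorem exists_EVtuple_isTree_exchange [Finite V] (hG : G.IsTree) (hT : T.Connected)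
    (hGu : G.Adj u ub) (hTu : ¬ T.Adj u ub) :
    ∃ w wb, EVtuple T w wb u ub ∧ ¬ G.Adj w wb ∧
      (G.deleteEdges {s(u, ub)} ⊔ edge w wb).IsTree := by
  set Gd := G.deleteEdges {s(u, ub)}
  have hbridge : ¬ Gd.Reachable u ub :=
    isBridge_iff.mp (isAcyclic_iff_forall_adj_isBridge.mp hG.isAcyclic hGu)
  obtain ⟨p, hp⟩ := (hT.preconnected u ub).some.toPath
  obtain ⟨d, hd, hw, hwb⟩ :=
    p.exists_boundary_dart {v | Gd.Reachable u v} Reachable.rfl hbridge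
  have hne : s(d.fst, d.snd) ≠ s(u, ub) := fun h => hTu <| by
    rcases Sym2.eq_iff.mp h with ⟨rfl, rfl⟩ | ⟨rfl, rfl⟩
    exacts [d.adj, d.adj.symm]
  have hn : ¬ G.Adj d.fst d.snd := fun h =>
    hwb (hw.trans (deleteEdges_adj.mpr ⟨h, hne⟩).reachable)
  have hwb' : Gd.Reachable ub d.snd :=
    (Reachable.deleteEdges_reachable_or hGu (hG.connected.preconnected u d.snd)).resolve_left hwb
  exact ⟨d.fst, d.snd, ⟨d.adj, p, hp, List.mem_map_of_mem hd,
    p.two_le_length_of_not_adj hGu.ne hTu⟩, hn, hG.deleteEdges_sup_edge hGu d.adj.ne hn hw hwb'⟩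

variable [Fintype V]

theorem score_sup_edge (W : V → V → ℝ) (hn : ¬ G.Adj u ub) (hne : u ≠ ub) :
    score W (G ⊔ edge u ub) = score W G + (W u ub + W ub u) := by
  have hn' : ¬ G.Adj ub u := fun h => hn h.symm
  have hedge : W u ub + W ub u = ∑ i, ∑ j,
      ((if i = u ∧ j = ub then W i j else 0) + if i = ub ∧ j = u then W i j else 0) := by
    simp [Finset.sum_add_distrib, ite_and]
  rw [score, score, hedge, ← Finset.sum_add_distrib]
  refine Finset.sum_congr rfl fun i _ => ?_
  rw [← Finset.sum_add_distrib]
  refine Finset.sum_congr rfl fun j _ => ?_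
  split_ifs <;> simp_all [edge_adj]

theorem IsMaxSpanTree.eq_of_forall_EVtuple {W : V → V → ℝ} (hT : T.IsTree)
    (hW : ∀ w wb u ub, EVtuple T w wb u ub → W u ub < W w wb) (hG : IsMaxSpanTree W G) :
    G = T := by
  have hle : G ≤ T := fun u ub hGu => by
    by_contra hTu
    obtain ⟨w, wb, hEV, hn, htree⟩ := exists_EVtuple_isTree_exchange hG.1 hT.connected hGu hTu
    have hscore := hG.2 _ htree
    have hsG : score W G = score W (G.deleteEdges {s(u, ub)}) + (W u ub + W ub u) := by
      conv_lhs => rw [← deleteEdges_sup_edge_of_adj hGu]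
      exact score_sup_edge W (by simp) hGu.ne
    rw [score_sup_edge W (by simp [hn]) hEV.1.ne, hsG] at hscore
    linarith [hW _ _ _ _ hEV, hW _ _ _ _ hEV.swap]
  refine edgeFinset_inj.mp (Finset.eq_of_subset_of_card_le (edgeFinset_mono hle) ?_)
  have := hT.card_edgeFinset
  have := hG.1.card_edgeFinset
  omega

theorem CLRecovers_of_forall_abs_empMI_sub_mi_lt {P : (V → A) → ℝ} (hT : T.IsTree) {n : ℕ}
    (ω : Fin n → V → A) (h : ∀ i j, |empMI ω i j - mi P i j| < thresh T (mi P)) :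
    CLRecovers T ω :=
  fun _ hG => hG.eq_of_forall_EVtuple hT fun w wb u ub hEV => by
    linarith [two_mul_thresh_le (mi P) hEV, abs_lt.mp (h u ub), abs_lt.mp (h w wb)]

end Recovery

theorem IsProbDist.sum_eq_one {α : Type*} [Fintype α] {f : α → ℝ} (hf : IsProbDist f) :
    ∑ a, f a = 1 :=
  (tsum_fintype f).symm.trans hf.2

theorem emp2_sub_eq_sum_div {n : ℕ} (ω : Fin n → V → A) (i j : V) (ab : A × A) (π : ℝ)
    (hn : n ≠ 0) :
    emp2 ω i j ab - π =
      (∑ k, ((if ω k i = ab.1 ∧ ω k j = ab.2 then 1 else 0) - π)) / n := by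
  rw [emp2, Finset.sum_sub_distrib, sub_div, Finset.sum_const, Finset.card_univ,
    Fintype.card_fin, nsmul_eq_mul, mul_div_cancel_left₀ _ (Nat.cast_ne_zero.mpr hn)]

theorem emp2_symm {n : ℕ} (ω : Fin n → V → A) (i j : V) (a b : A) :
    emp2 ω i j (a, b) = emp2 ω j i (b, a) := by
  simp only [emp2, and_comm]

section Sampling

variable [Fintype V] [Fintype A] {P : (V → A) → ℝ} {n : ℕ}

theorem probn_eq_sum (P : (V → A) → ℝ) (n : ℕ) (E : Set (Fin n → V → A)) :
    probn P n E = ∑ ω, if ω ∈ E then ∏ k, P (ω k) else 0 := by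
  rw [probn, tsum_subtype E fun ω => ∏ k, P (ω k), tsum_fintype]
  simp only [Set.indicator_apply]

theorem probn_mono (hP : ∀ x, 0 ≤ P x) {E F : Set (Fin n → V → A)} (h : E ⊆ F) :
    probn P n E ≤ probn P n F := by
  simp only [probn_eq_sum]
  gcongr with ω
  split_ifs <;> first | rfl | exact absurd (h ‹_›) ‹_› | exact Finset.prod_nonneg fun k _ => hP _

theorem probn_compl (hP : IsProbDist P) (E : Set (Fin n → V → A)) :
    probn P n Eᶜ = 1 - probn P n E := by
  rw [eq_sub_iff_add_eq, probn_eq_sum, probn_eq_sum, ← Finset.sum_add_distrib,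
    ← one_pow n, ← hP.sum_eq_one, Fintype.sum_pow]
  congr! 1 with ω
  by_cases hω : ω ∈ E <;> simp [hω]

theorem probn_iUnion_le {ι : Type*} [Fintype ι] (hP : ∀ x, 0 ≤ P x)
    (E : ι → Set (Fin n → V → A)) :
    probn P n (⋃ i, E i) ≤ ∑ i, probn P n (E i) := by
  simp only [probn_eq_sum]
  rw [Finset.sum_comm]
  gcongr with ω
  have hterm : ∀ i, 0 ≤ if ω ∈ E i then ∏ k, P (ω k) else 0 := fun i => by
    split_ifs
    exacts [Finset.prod_nonneg fun k _ => hP _, le_rfl]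
  split_ifs with hω
  · obtain ⟨i, hi⟩ := Set.mem_iUnion.mp hω
    simpa [hi] using Finset.single_le_sum (fun j _ => hterm j) (Finset.mem_univ i)
  · exact Finset.sum_nonneg fun j _ => hterm j

theorem probn_union_le (hP : ∀ x, 0 ≤ P x) (E F : Set (Fin n → V → A)) :
    probn P n (E ∪ F) ≤ probn P n E + probn P n F := by
  simpa [Set.union_eq_iUnion, Fintype.sum_bool, add_comm] using
    probn_iUnion_le hP fun b => cond b E F

theorem probn_sum_ge_le (hP : ∀ x, 0 ≤ P x) (g : (V → A) → ℝ) {a t : ℝ} (ht : 0 ≤ t) :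
    probn P n {ω | a * n ≤ ∑ k, g (ω k)} ≤ (∑ x, P x * Real.exp (t * (g x - a))) ^ n := by
  rw [probn_eq_sum, Fintype.sum_pow]
  gcongr with ω
  have hexp : ∏ k, P (ω k) * Real.exp (t * (g (ω k) - a)) =
      (∏ k, P (ω k)) * Real.exp (t * (∑ k, g (ω k) - a * n)) := by
    rw [Finset.prod_mul_distrib, ← Real.exp_sum, ← Finset.mul_sum, Finset.sum_sub_distrib]
    simp [mul_comm]
  rw [hexp]
  have hw : 0 ≤ ∏ k, P (ω k) := Finset.prod_nonneg fun k _ => hP _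
  split_ifs with hω
  · exact le_mul_of_one_le_right hw (Real.one_le_exp (mul_nonneg ht (sub_nonneg.mpr hω)))
  · positivity

theorem sum_mul_exp_indicator_sub_le (hP : IsProbDist P) (Q : (V → A) → Prop) [DecidablePred Q]
    {π t : ℝ} (hπ : ∑ x, (if Q x then P x else 0) = π) (ht : |t| ≤ 1) :
    ∑ x, P x * Real.exp (t * ((if Q x then 1 else 0) - π)) ≤ Real.exp (t ^ 2) := by
  have hπ0 : 0 ≤ π := hπ ▸ Finset.sum_nonneg fun x _ => by split_ifs <;> simp [hP.1 x]
  have hπ1 : π ≤ 1 := hπ ▸ hP.sum_eq_one ▸ Finset.sum_le_sum fun x _ => by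
    split_ifs <;> simp [hP.1 x]
  have hquad : Real.exp t - 1 - t ≤ t ^ 2 :=
    (le_abs_self _).trans (Real.abs_exp_sub_one_sub_id_le ht)
  calc _ = ∑ x, Real.exp (-(t * π)) * (P x + (if Q x then P x else 0) * (Real.exp t - 1)) := by
        refine Finset.sum_congr rfl fun x _ => ?_
        split_ifs
        · rw [show t * (1 - π) = t + -(t * π) by ring, Real.exp_add]; ring
        · rw [show t * (0 - π) = -(t * π) by ring]; ring
    _ = Real.exp (-(t * π)) * (1 + π * (Real.exp t - 1)) := by
        rw [← Finset.mul_sum, Finset.sum_add_distrib, ← Finset.sum_mul, hP.sum_eq_one, hπ]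
    _ ≤ Real.exp (-(t * π)) * Real.exp (π * (Real.exp t - 1)) := by
        gcongr; linarith [Real.add_one_le_exp (π * (Real.exp t - 1))]
    _ = Real.exp (π * (Real.exp t - 1 - t)) := by rw [← Real.exp_add]; ring_nf
    _ ≤ Real.exp (t ^ 2) := by
        gcongr
        nlinarith [sq_nonneg t]

theorem probn_sum_mul_indicator_sub_ge_le (hP : IsProbDist P) (Q : (V → A) → Prop)
    [DecidablePred Q] {π s ε : ℝ} (hπ : ∑ x, (if Q x then P x else 0) = π) (hs : |s| ≤ 1)
    (hε0 : 0 ≤ ε) (hε2 : ε ≤ 2) :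
    probn P n {ω | ε * n ≤ ∑ k, s * ((if Q (ω k) then 1 else 0) - π)} ≤
      Real.exp (-(ε ^ 2 / 4)) ^ n := by
  refine (probn_sum_ge_le hP.1 (fun x => s * ((if Q x then 1 else 0) - π))
    (t := ε / 2) (by positivity)).trans (pow_le_pow_left₀
    (Finset.sum_nonneg fun x _ => mul_nonneg (hP.1 x) (Real.exp_pos _).le) ?_ n)
  have hst : |s * (ε / 2)| ≤ 1 := by
    rw [abs_mul, abs_of_nonneg (by positivity : 0 ≤ ε / 2)]
    nlinarith [abs_nonneg s]
  calc ∑ x, P x * Real.exp (ε / 2 * (s * ((if Q x then 1 else 0) - π) - ε))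
      = Real.exp (-(ε ^ 2 / 2)) *
          ∑ x, P x * Real.exp (s * (ε / 2) * ((if Q x then 1 else 0) - π)) := by
        rw [Finset.mul_sum]
        refine Finset.sum_congr rfl fun x _ => ?_
        rw [mul_left_comm, ← Real.exp_add]; ring_nf
    _ ≤ Real.exp (-(ε ^ 2 / 2)) * Real.exp ((s * (ε / 2)) ^ 2) := by
        gcongr; exact sum_mul_exp_indicator_sub_le hP Q hπ hst
    _ ≤ Real.exp (-(ε ^ 2 / 4)) := by
        have hs2 : s ^ 2 ≤ 1 := by rw [← sq_abs]; exact pow_le_one₀ (abs_nonneg s) hs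
        rw [← Real.exp_add]
        gcongr
        nlinarith [mul_le_mul_of_nonneg_right hs2 (sq_nonneg ε)]

theorem probn_abs_sum_indicator_sub_ge_le (hP : IsProbDist P) (Q : (V → A) → Prop)
    [DecidablePred Q] {π ε : ℝ} (hπ : ∑ x, (if Q x then P x else 0) = π) (hε0 : 0 ≤ ε)
    (hε2 : ε ≤ 2) :
    probn P n {ω | ε * n ≤ |∑ k, ((if Q (ω k) then 1 else 0) - π)|} ≤
      2 * Real.exp (-(ε ^ 2 / 4)) ^ n := by
  calc _ ≤ probn P n ({ω | ε * n ≤ ∑ k, 1 * ((if Q (ω k) then 1 else 0) - π)} ∪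
        {ω | ε * n ≤ ∑ k, -1 * ((if Q (ω k) then 1 else 0) - π)}) := by
        refine probn_mono hP.1 fun ω hω => ?_
        simp only [Set.mem_ofPred_eq, Set.mem_union, one_mul, neg_one_mul,
          Finset.sum_neg_distrib] at hω ⊢
        exact (le_abs'.mp hω).symm.imp_right le_neg.mp
    _ ≤ _ := (probn_union_le hP.1 _ _).trans <| by
        linarith [probn_sum_mul_indicator_sub_ge_le (n := n) hP Q hπ (s := 1) (by simp) hε0 hε2,
          probn_sum_mul_indicator_sub_ge_le (n := n) hP Q hπ (s := -1) (by simp) hε0 hε2]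

theorem marg2_eq_sum (P : (V → A) → ℝ) (i j : V) (ab : A × A) :
    marg2 P i j ab = ∑ x, if x i = ab.1 ∧ x j = ab.2 then P x else 0 :=
  tsum_fintype _

theorem probn_abs_emp2_sub_marg2_ge_le (hP : IsProbDist P) (i j : V) (ab : A × A) {ε : ℝ}
    (hε0 : 0 ≤ ε) (hε2 : ε ≤ 2) (hn : n ≠ 0) :
    probn P n {ω | ε ≤ |emp2 ω i j ab - marg2 P i j ab|} ≤
      2 * Real.exp (-(ε ^ 2 / 4)) ^ n := by
  refine le_trans (probn_mono hP.1 fun ω hω => ?_)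
    (probn_abs_sum_indicator_sub_ge_le hP (fun x => x i = ab.1 ∧ x j = ab.2)
      (marg2_eq_sum P i j ab).symm hε0 hε2)
  have hn' : (0 : ℝ) < n := Nat.cast_pos.mpr (Nat.pos_of_ne_zero hn)
  rwa [Set.mem_ofPred_eq, emp2_sub_eq_sum_div ω i j ab _ hn, abs_div, Nat.abs_cast,
    le_div_iff₀ hn'] at hω

theorem probn_exists_abs_emp2_sub_marg2_ge_le (hP : IsProbDist P) {ε : ℝ}
    (hε0 : 0 ≤ ε) (hε2 : ε ≤ 2) (hn : n ≠ 0) :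
    probn P n {ω | ∃ i j ab, ε ≤ |emp2 ω i j ab - marg2 P i j ab|} ≤
      Fintype.card (V × V × (A × A)) * (2 * Real.exp (-(ε ^ 2 / 4)) ^ n) := by
  calc _ = probn P n (⋃ x : V × V × (A × A),
        {ω | ε ≤ |emp2 ω x.1 x.2.1 x.2.2 - marg2 P x.1 x.2.1 x.2.2|}) := by
        congr 1; ext ω; simp
    _ ≤ _ := (probn_iUnion_le hP.1 _).trans <|
        (Finset.sum_le_sum fun x _ =>
          probn_abs_emp2_sub_marg2_ge_le hP x.1 x.2.1 x.2.2 hε0 hε2 hn).trans_eq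
        (by rw [Finset.sum_const, Finset.card_univ, nsmul_eq_mul])

end Sampling

def jointMI [Fintype A] (q : A × A → ℝ) : ℝ :=
  ent (fun a => ∑ b, q (a, b)) + ent (fun b => ∑ a, q (a, b)) - ent q

section Continuity

variable [Fintype A]

theorem continuous_ent {α : Type*} [Fintype α] : Continuous (ent : (α → ℝ) → ℝ) := by
  have hφ : Continuous fun x : ℝ => x * Real.logb 2 x := by
    simp_rw [Real.logb, mul_div_assoc']
    exact Real.continuous_mul_log.div_const _
  simp_rw [funext fun f : α → ℝ => show ent f = -∑ a, f a * Real.logb 2 (f a) by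
    rw [ent, tsum_fintype]]
  exact (continuous_finsetSum _ fun a _ => hφ.comp (continuous_apply a)).neg

theorem continuous_jointMI : Continuous (jointMI : (A × A → ℝ) → ℝ) := by
  have := continuous_ent (α := A)
  have := continuous_ent (α := A × A)
  unfold jointMI
  fun_prop

theorem emp1_eq_sum_emp2 {n : ℕ} (ω : Fin n → V → A) (i j : V) (a : A) :
    emp1 ω i a = ∑ b, emp2 ω i j (a, b) := by
  simp only [emp1, emp2, ← Finset.sum_div]
  rw [Finset.sum_comm]
  congr 1
  refine Finset.sum_congr rfl fun k _ => ?_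
  by_cases h : ω k i = a <;> simp [h]

theorem empMI_eq_jointMI {n : ℕ} (ω : Fin n → V → A) (i j : V) :
    empMI ω i j = jointMI (emp2 ω i j) := by
  rw [empMI, jointMI, funext (emp1_eq_sum_emp2 ω i j), funext (emp1_eq_sum_emp2 ω j i)]
  simp_rw [emp2_symm ω j i]

variable [Fintype V]

theorem marg1_eq_sum_marg2 (P : (V → A) → ℝ) (i j : V) (a : A) :
    marg1 P i a = ∑ b, marg2 P i j (a, b) := by
  simp only [marg1, marg2, tsum_fintype]
  rw [Finset.sum_comm]
  refine Finset.sum_congr rfl fun x _ => ?_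
  by_cases h : x i = a <;> simp [h]

theorem mi_eq_jointMI (P : (V → A) → ℝ) (i j : V) : mi P i j = jointMI (marg2 P i j) := by
  rw [mi, jointMI, funext (marg1_eq_sum_marg2 P i j), funext (marg1_eq_sum_marg2 P j i)]
  simp_rw [marg2_symm P j i]

theorem exists_forall_abs_empMI_sub_mi_lt (P : (V → A) → ℝ) {θ : ℝ} (hθ : 0 < θ) :
    ∃ ε > 0, ∀ {n : ℕ} (ω : Fin n → V → A), (∀ i j ab, |emp2 ω i j ab - marg2 P i j ab| < ε) →
      ∀ i j, |empMI ω i j - mi P i j| < θ := by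
  have hF : Continuous fun (q : V → V → A × A → ℝ) i j => jointMI (q i j) := by
    have := continuous_jointMI (A := A)
    fun_prop
  obtain ⟨ε, hε, hball⟩ := Metric.continuous_iff.mp hF (fun i j => marg2 P i j) θ hθ
  refine ⟨ε, hε, fun ω hω i j => ?_⟩
  have hdist : dist (fun i j => emp2 ω i j) (fun i j => marg2 P i j) < ε :=
    (dist_pi_lt_iff hε).mpr fun i => (dist_pi_lt_iff hε).mpr fun j =>
      (dist_pi_lt_iff hε).mpr fun ab => hω i j ab
  rw [empMI_eq_jointMI, mi_eq_jointMI, ← Real.dist_eq]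
  exact (dist_pi_lt_iff hθ).mp ((dist_pi_lt_iff hθ).mp (hball _ hdist) i) j

end Continuity

theorem exists_one_sub_mul_exp_le_probn_CLRecovers [Fintype V] [Fintype A] {T : SimpleGraph V}
    {P : (V → A) → ℝ} (hT : T.IsTree) (hP : IsProbDist P) (hθ : 0 < thresh T (mi P)) :
    ∃ K κ : ℝ, 0 < κ ∧ ∀ n : ℕ, n ≠ 0 →
      1 - K * Real.exp (-(κ * n)) ≤ probn P n {ω | CLRecovers T ω} := by
  obtain ⟨ε, hε, hclose⟩ := exists_forall_abs_empMI_sub_mi_lt P hθ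
  set ε' := min ε 2
  have hε' : 0 < ε' := lt_min hε two_pos
  refine ⟨Fintype.card (V × V × (A × A)) * 2, ε' ^ 2 / 4, by positivity, fun n hn => ?_⟩
  have hfar := probn_exists_abs_emp2_sub_marg2_ge_le hP hε'.le (min_le_right ε 2) hn
  rw [← Real.exp_nat_mul, mul_neg, mul_comm (n : ℝ)] at hfar
  calc _ ≤ 1 - probn P n {ω | ∃ i j ab, ε' ≤ |emp2 ω i j ab - marg2 P i j ab|} := by
        linarith
    _ = probn P n {ω | ∀ i j ab, |emp2 ω i j ab - marg2 P i j ab| < ε'} := by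
        rw [← probn_compl hP]
        congr 1; ext ω; simp
    _ ≤ _ := probn_mono hP.1 fun ω hω => CLRecovers_of_forall_abs_empMI_sub_mi_lt hT ω <|
        hclose ω fun i j ab => (hω i j ab).trans_le (min_le_left ε 2)

open Filter in
theorem eventually_mul_exp_neg_le_exp_neg_div_logb_sq (K : ℝ) {κ : ℝ} (hκ : 0 < κ) (c : ℝ) :
    ∀ᶠ n : ℕ in atTop, K * Real.exp (-(κ * n)) ≤ Real.exp (-(n * c / Real.logb 2 n ^ 2)) := by
  have hlog : Tendsto (fun n : ℕ => c / Real.logb 2 n ^ 2) atTop (nhds 0) :=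
    tendsto_const_nhds.div_atTop <| (tendsto_pow_atTop two_ne_zero).comp <|
      (Real.tendsto_logb_atTop one_lt_two).comp tendsto_natCast_atTop_atTop
  have hexp : Tendsto (fun n : ℕ => Real.exp (κ / 2 * n)) atTop atTop :=
    Real.tendsto_exp_atTop.comp (tendsto_natCast_atTop_atTop.const_mul_atTop (half_pos hκ))
  filter_upwards [hlog.eventually_le_const (half_pos hκ), hexp.eventually_ge_atTop K]
    with n hc hK
  calc K * Real.exp (-(κ * n)) ≤ Real.exp (κ / 2 * n) * Real.exp (-(κ * n)) := by gcongr
    _ = Real.exp (-(n * (κ / 2))) := by rw [← Real.exp_add]; ring_nf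
    _ ≤ Real.exp (-(n * c / Real.logb 2 n ^ 2)) := by rw [mul_div_assoc]; gcongr

theorem exp_neg_le_of_sample_bound {p δ θ D : ℝ} {n : ℕ} (hp : 1 ≤ p) (hδ : 0 < δ) (hD : 0 < D)
    (hDθ : D ≤ θ) (h : 72 * Real.log (p / δ) / D ^ 2 ≤ n / Real.logb 2 n ^ 2) :
    Real.exp (-(n * (θ ^ 2 / 72) / Real.logb 2 n ^ 2)) ≤ δ := by
  rw [div_le_iff₀ (by positivity)] at h
  have hθD : n / Real.logb 2 n ^ 2 * D ^ 2 ≤ n / Real.logb 2 n ^ 2 * θ ^ 2 := by gcongr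
  rw [← Real.le_log_iff_exp_le hδ]
  rw [Real.log_div (by positivity) hδ.ne'] at h
  linarith [Real.log_nonneg hp, show n * (θ ^ 2 / 72) / Real.logb 2 n ^ 2 =
    n / Real.logb 2 n ^ 2 * θ ^ 2 / 72 by ring]

theorem chow_liu_sample_complexity_finite_general
    {V : Type*} [Fintype V] {A : Type*} [Fintype A]
    (T : SimpleGraph V) (hT : T.IsTree) (hcard : 3 ≤ Fintype.card V)
    (P : (V → A) → ℝ) (hP : IsProbDist P) :
    ∃ C : ℝ, 0 < C ∧
      ∀ δ ∈ Set.Ioo (0 : ℝ) 1, ∀ n : ℕ,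
        72 * Real.log ((Fintype.card V : ℝ) / δ)
            / (thresh T (mi P) - C / Real.sqrt n) ^ 2
          ≤ (n : ℝ) / (Real.logb 2 (n : ℝ)) ^ 2 →
        C / Real.sqrt n < thresh T (mi P) →
        1 - δ ≤ probn P n {ω | CLRecovers T ω} := by
  set θ := thresh T (mi P)
  rcases le_or_gt θ 0 with hθ | hθ
  · exact ⟨1, one_pos, fun δ _ n _ h => absurd h (not_lt.mpr (hθ.trans (by positivity)))⟩
  obtain ⟨K, κ, hκ, hcons⟩ := exists_one_sub_mul_exp_le_probn_CLRecovers hT hP hθ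
  obtain ⟨N, hN⟩ := Filter.eventually_atTop.mp
    (eventually_mul_exp_neg_le_exp_neg_div_logb_sq K hκ (θ ^ 2 / 72))
  refine ⟨θ * √(N + 1), by positivity, fun δ ⟨hδ0, hδ1⟩ n h1 h2 => ?_⟩
  have hp : (1 : ℝ) ≤ Fintype.card V := by exact_mod_cast (by omega : 1 ≤ Fintype.card V)
  have hδ := exp_neg_le_of_sample_bound hp hδ0 (sub_pos.mpr h2) (sub_le_self _ (by positivity)) h1
  have hNn : N < n := by
    -- at `n = 0` the second hypothesis is vacuous (`√0 = 0`), but `hδ` reads `1 ≤ δ`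
    rcases Nat.eq_zero_or_pos n with rfl | hn
    · simp at hδ; linarith
    rw [div_lt_iff₀ (by positivity)] at h2
    have := (Real.sqrt_lt_sqrt_iff (by positivity)).mp (lt_of_mul_lt_mul_left h2 hθ.le)
    exact_mod_cast (by linarith : (N : ℝ) < n)
  linarith [hN n hNn.le, hcons n (by omega)]

/-- **Finite-alphabet sample complexity of the Chow–Liu algorithm.**
If `X` has finite support and a tree-structured distribution in `P_T(c₁, c₂)`
(for a finite alphabet, Assumption 1 just says all singleton and pairwise
marginals are bounded between positive constants, i.e. have full support), then
there is a constant `C > 0`, independent of `δ`, such that whenever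
`n/(log₂ n)² ≥ 72 log(p/δ)/(I^o − C/√n)²` and `I^o > C/√n`, the Chow–Liu
algorithm run on `n` i.i.d. samples returns `T` with probability at least `1 − δ`. -/
theorem chow_liu_sample_complexity_finite
    {V : Type*} [Fintype V] [DecidableEq V] {A : Type*} [Fintype A]
    (T : SimpleGraph V) (hT : T.IsTree) (hcard : 3 ≤ Fintype.card V)
    (P : (V → A) → ℝ) (hP : IsProbDist P) (hMarkov : IsMarkovTree T P)
    (hA1 : (∀ (i : V) (a : A), 0 < marg1 P i a) ∧
      ∀ (i j : V), i ≠ j → ∀ ab : A × A, 0 < marg2 P i j ab)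
    (hA2 : Assumption2 T P) :
    ∃ C : ℝ, 0 < C ∧
      ∀ δ ∈ Set.Ioo (0 : ℝ) 1, ∀ n : ℕ,
        72 * Real.log ((Fintype.card V : ℝ) / δ)
            / (thresh T (mi P) - C / Real.sqrt n) ^ 2
          ≤ (n : ℝ) / (Real.logb 2 (n : ℝ)) ^ 2 →
        C / Real.sqrt n < thresh T (mi P) →
        1 - δ ≤ probn P n {ω | CLRecovers T ω} :=
  chow_liu_sample_complexity_finite_general T hT hcard P hP

end TreePaper
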